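/- Fix r ≥ 1 and d ≥ 2, let m = rd, and partition {1,…,m} into sets A_1,…,A_r each of size d. For k ∈ {1,…,r} let X_k be the join Δ(A_1×{k}) * ⋯ * Δ(A_{k-1}×{k}) * ∂Δ(A_k×{k}) * Δ(A_{k+1}×{k}) * ⋯ * Δ(A_r×{k}), where Δ(A) denotes the full simplex on vertex set A and ∂Δ(A) its boundary complex. Let X = ⋃_{k=1}^r X_k, a subcomplex of V_1*⋯*V_m with V_i = {i}×{1,…,r}. Then the projection π: X → Δ_{m-1} given by π((i,j)) = i satisfies π(X) = ∂Δ_{m-1}, the boundary of the (m−1)-simplex; hence L(π(X)) = m − 1 = rd − 1. -/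

import Mathlib

open Classical in
/-- A (possibly abstract) simplicial complex: a set of finsets closed under taking subsets. -/
def IsComplex {V : Type*} (X : Set (Finset V)) : Prop := ∀ s ∈ X, ∀ t ⊆ s, t ∈ X

/-- Ordered `n`-tuples of vertices spanning a simplex of `X` (repetitions allowed). -/
def Tup {V : Type*} [DecidableEq V] (X : Set (Finset V)) (n : ℕ) : Type _ :=
  {σ : Fin n → V // Finset.image σ Finset.univ ∈ X}

/-- Rational ordered simplicial chains on tuples of `n` vertices. -/
abbrev Chains {V : Type*} [DecidableEq V] (X : Set (Finset V)) (n : ℕ) := Tup X n →₀ ℚ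

open Classical in
noncomputable def gen {V : Type*} [DecidableEq V] (X : Set (Finset V)) {n : ℕ}
    (τ : Fin n → V) : Chains X n :=
  if h : Finset.image τ Finset.univ ∈ X then Finsupp.single ⟨τ, h⟩ 1 else 0

/-- The simplicial boundary map. -/
noncomputable def bdry {V : Type*} [DecidableEq V] (X : Set (Finset V)) (n : ℕ) :
    Chains X (n + 1) →ₗ[ℚ] Chains X n :=
  Finsupp.lsum ℚ fun σ => LinearMap.toSpanSingleton ℚ (Chains X n)
    (∑ i : Fin (n + 1), ((-1 : ℚ) ^ (i : ℕ)) • gen X (σ.1 ∘ i.succAbove))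

/-- Reduced rational homology `H̃_i(X;ℚ)` (chains on `i+1` vertices correspond to
`i`-dimensional simplices; tuples with `0` vertices give the augmentation). -/
noncomputable abbrev reducedHomology {V : Type*} [DecidableEq V] (X : Set (Finset V)) (i : ℕ) :=
  LinearMap.ker (bdry X i) ⧸
    Submodule.comap (LinearMap.ker (bdry X i)).subtype (LinearMap.range (bdry X (i + 1)))

/-- `H̃_i(X;ℚ) = 0`. -/
def HomologyVanishes {V : Type*} [DecidableEq V] (X : Set (Finset V)) (i : ℕ) : Prop :=
  ∀ x : reducedHomology X i, x = 0

/-- The induced subcomplex on a vertex subset. -/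
def induced {V : Type*} (X : Set (Finset V)) (S : Finset V) : Set (Finset V) :=
  {s ∈ X | s ⊆ S}

/-- The rational Leray number `L(X)`. -/
noncomputable def lerayNumber {V : Type*} [DecidableEq V] (X : Set (Finset V)) : ℕ :=
  sInf {d | ∀ S : Finset V, ∀ i, d ≤ i → HomologyVanishes (induced X S) i}

/-- The geometric realization of a complex `X`: convex-combination weight functions whose
support is a simplex of `X`. -/
def geomPt {V : Type*} [Fintype V] (X : Set (Finset V)) : Type _ :=
  {f : V → ℝ // (∀ v, 0 ≤ f v) ∧ (∑ v, f v) = 1 ∧ ∃ s ∈ X, ∀ v, f v ≠ 0 ↔ v ∈ s}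

/-- The affine extension of the vertex projection `p` to the geometric realization. -/
noncomputable def projPt {V : Type*} [Fintype V] {m : ℕ} (p : V → Fin m) (f : V → ℝ) :
    Fin m → ℝ :=
  fun i => ∑ v ∈ Finset.univ.filter (fun v => p v = i), f v

/-- The image complex `π(X)` under the simplicial projection induced by `p`. -/
def imageComplex {V : Type*} [DecidableEq V] {m : ℕ} (p : V → Fin m)
    (X : Set (Finset V)) : Set (Finset (Fin m)) :=
  {t : Finset (Fin m) | ∃ s ∈ X, t = s.image p}

/-- The complex `X = ⋃_k X_k` of the example: `X_k` is the join of the full simplices on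
`A_t × {k}` (`t ≠ k`) and the boundary of the simplex on `A_k × {k}`; concretely, a simplex of
`X_k` is a set of vertices of second coordinate `k` missing some vertex `(i,k)` with
`i ∈ A k`. -/
def exampleCplx {r m : ℕ} (A : Fin r → Finset (Fin m)) :
    Set (Finset (Fin m × Fin r)) :=
  ⋃ k : Fin r, {σ : Finset (Fin m × Fin r) |
    (∀ v ∈ σ, v.2 = k) ∧ ∃ i ∈ A k, (i, k) ∉ σ}

set_option linter.unusedSectionVars false
set_option maxHeartbeats 1000000

namespace Stmt13Aux

lemma val_succAbove {n : ℕ} (p : Fin (n+1)) (x : Fin n) :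
    ((p.succAbove x : Fin (n+1)) : ℕ) = if (x:ℕ) < (p:ℕ) then (x:ℕ) else (x:ℕ)+1 := by
  rcases lt_or_ge (Fin.castSucc x) p with h | h
  · rw [Fin.succAbove_of_castSucc_lt _ _ h]
    simp [Fin.lt_def] at h
    simp [h]
  · rw [Fin.succAbove_of_le_castSucc _ _ h]
    simp [Fin.le_def] at h
    simp [Fin.val_succ, Nat.not_lt.mpr h]

lemma SI {n : ℕ} (i : Fin (n+2)) (j : Fin (n+1)) (h : (j:ℕ) < (i:ℕ)) (hne : i ≠ 0) (k : Fin n) :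
    i.succAbove (j.succAbove k) =
      (Fin.castSucc j).succAbove ((i.pred hne).succAbove k) := by
  apply Fin.ext
  rw [val_succAbove, val_succAbove, val_succAbove, val_succAbove]
  have h2 : ((i.pred hne : Fin (n+1)) : ℕ) = (i:ℕ) - 1 := rfl
  have h1 : ((Fin.castSucc j : Fin (n+2)) : ℕ) = (j:ℕ) := rfl
  rw [h1, h2]
  have : (i:ℕ) ≠ 0 := by
    intro h0; exact hne (Fin.ext h0)
  split_ifs <;> omega

lemma pairing {α : Type*} {n : ℕ} {M : Type*} [AddCommGroup M] [Module ℚ M]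
    (g : (Fin n → α) → M) (τ : Fin (n+2) → α) :
    ∑ i : Fin (n+2), ∑ j : Fin (n+1),
      ((-1:ℚ) ^ ((i:ℕ)+(j:ℕ))) • g (τ ∘ i.succAbove ∘ j.succAbove) = 0 := by
  rw [← Finset.sum_product']
  refine Finset.sum_ninvolution
    (g := fun p : Fin (n+2) × Fin (n+1) =>
      if h : (p.2:ℕ) < (p.1:ℕ) then
        (Fin.castSucc p.2, p.1.pred (fun hp => by simp [hp] at h))
      else
        (Fin.succ p.2, p.1.castPred (fun hp => by
          apply h; rw [hp]; simpa using p.2.isLt)))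
    ?_ ?_ (fun _ => Finset.mem_univ _) ?_
  · rintro ⟨i, j⟩
    dsimp only
    by_cases h : (j:ℕ) < (i:ℕ)
    · rw [dif_pos h]
      dsimp only
      have hne : i ≠ 0 := fun hp => by simp [hp] at h
      have e1 : τ ∘ (Fin.castSucc j).succAbove ∘ (i.pred hne).succAbove
          = τ ∘ i.succAbove ∘ j.succAbove := by
        funext k
        exact congrArg τ (SI i j h hne k).symm
      rw [e1, ← add_smul]
      have hc : ((Fin.castSucc j : Fin (n+2)):ℕ) + ((i.pred hne : Fin (n+1)):ℕ)
          = (i:ℕ) + (j:ℕ) - 1 := by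
        simp only [Fin.coe_castSucc, Fin.coe_pred]
        omega
      obtain ⟨a, ha⟩ : ∃ a, (i:ℕ) + (j:ℕ) = a + 1 := ⟨(i:ℕ)+(j:ℕ)-1, by omega⟩
      rw [hc, ha]
      simp only [Nat.add_sub_cancel]
      rw [pow_succ]
      convert zero_smul ℚ (g (τ ∘ i.succAbove ∘ j.succAbove)) using 2
      ring
    · rw [dif_neg h]
      dsimp only
      have hlast : i ≠ Fin.last (n+1) := fun hp => by
        apply h; rw [hp]; simpa using j.isLt
      have hcond : ((i.castPred hlast : Fin (n+1)):ℕ) < ((j.succ : Fin (n+2)):ℕ) := by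
        simp only [Fin.coe_castPred, Fin.val_succ]
        omega
      have hne2 : (j.succ : Fin (n+2)) ≠ 0 := Fin.succ_ne_zero j
      have e1 : τ ∘ (j.succ).succAbove ∘ (i.castPred hlast).succAbove
          = τ ∘ i.succAbove ∘ j.succAbove := by
        funext k
        have h2 := SI j.succ (i.castPred hlast) hcond hne2 k
        simp only [Function.comp_apply]
        rw [h2, Fin.castSucc_castPred, Fin.pred_succ]
      rw [e1, ← add_smul]
      have hc : ((j.succ : Fin (n+2)):ℕ) + ((i.castPred hlast : Fin (n+1)):ℕ)
          = ((i:ℕ) + (j:ℕ)) + 1 := by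
        simp only [Fin.coe_castPred, Fin.val_succ]
        omega
      rw [hc, pow_succ]
      convert zero_smul ℚ (g (τ ∘ i.succAbove ∘ j.succAbove)) using 2
      ring
  · rintro ⟨i, j⟩ -
    dsimp only
    by_cases h : (j:ℕ) < (i:ℕ)
    · rw [dif_pos h]
      intro he
      have := congrArg (fun p => ((p.1 : Fin (n+2)) : ℕ)) he
      simp only [Fin.coe_castSucc] at this
      omega
    · rw [dif_neg h]
      intro he
      have := congrArg (fun p => ((p.1 : Fin (n+2)) : ℕ)) he
      simp only [Fin.val_succ] at this
      omega
  · rintro ⟨i, j⟩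
    dsimp only
    by_cases h : (j:ℕ) < (i:ℕ)
    · rw [dif_pos h]
      dsimp only
      rw [dif_neg (by simp only [Fin.coe_castSucc, Fin.coe_pred]; omega)]
      ext
      · simp [Fin.succ_pred]
      · simp [Fin.castPred_castSucc]
    · rw [dif_neg h]
      dsimp only
      rw [dif_pos (by simp only [Fin.coe_castPred, Fin.val_succ]; omega)]
      ext
      · simp [Fin.castSucc_castPred]
      · simp [Fin.pred_succ]

end Stmt13Aux

namespace Stmt13Aux

variable {V : Type*} [DecidableEq V]

lemma image_comp_subset {m k : ℕ} (σ : Fin m → V) (f : Fin k → Fin m) :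
    Finset.image (σ ∘ f) Finset.univ ⊆ Finset.image σ Finset.univ := by
  intro x hx
  simp only [Finset.mem_image, Finset.mem_univ, true_and] at hx ⊢
  obtain ⟨j, hj⟩ := hx
  exact ⟨f j, hj⟩

lemma image_cons {n : ℕ} (v₀ : V) (τ : Fin n → V) :
    Finset.image (Fin.cons v₀ τ : Fin (n+1) → V) Finset.univ
      = insert v₀ (Finset.image τ Finset.univ) := by
  ext x
  simp only [Finset.mem_image, Finset.mem_univ, true_and, Finset.mem_insert]
  constructor
  · rintro ⟨j, hj⟩
    rcases Fin.eq_zero_or_eq_succ j with rfl | ⟨j', rfl⟩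
    · left; exact hj.symm
    · right; exact ⟨j', hj⟩
  · rintro (rfl | ⟨j', hj⟩)
    · exact ⟨0, rfl⟩
    · exact ⟨j'.succ, hj⟩

lemma gen_of_mem {X : Set (Finset V)} {n : ℕ} (τ : Fin n → V)
    (h : Finset.image τ Finset.univ ∈ X) :
    gen X τ = Finsupp.single ⟨τ, h⟩ 1 := by
  rw [gen, dif_pos h]

lemma gen_of_not_mem {X : Set (Finset V)} {n : ℕ} (τ : Fin n → V)
    (h : Finset.image τ Finset.univ ∉ X) : gen X τ = 0 := by
  rw [gen, dif_neg h]

lemma single_eq_smul {X : Set (Finset V)} {n : ℕ} (τ : Tup X n) (b : ℚ) :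
    Finsupp.single τ b = b • Finsupp.single τ 1 := by
  rw [Finsupp.smul_single, smul_eq_mul, mul_one]

lemma lhom_ext1 {X : Set (Finset V)} {n : ℕ} {M : Type*} [AddCommGroup M] [Module ℚ M]
    {φ ψ : Chains X n →ₗ[ℚ] M}
    (h : ∀ τ : Tup X n, φ (Finsupp.single τ 1) = ψ (Finsupp.single τ 1)) : φ = ψ := by
  refine Finsupp.lhom_ext fun τ b => ?_
  rw [single_eq_smul, map_smul, map_smul, h]

lemma bdry_single {X : Set (Finset V)} {n : ℕ} (σ : Tup X (n+1)) :
    bdry X n (Finsupp.single σ 1)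
      = ∑ i : Fin (n+1), ((-1:ℚ)^(i:ℕ)) • gen X (σ.1 ∘ i.succAbove) := by
  simp [bdry, Finsupp.lsum_single, LinearMap.toSpanSingleton_apply]

/-- the subcomplex-with-covering: simplices contained in `F` and containing `T`. -/
def sub (T F : Finset V) : Set (Finset V) := {s | s ⊆ F ∧ T ⊆ s}

noncomputable def Kmap (X Y : Set (Finset V)) (v₀ : V) (t : ℕ) :
    Chains Y t →ₗ[ℚ] Chains X (t+1) :=
  Finsupp.lsum ℚ fun υ => LinearMap.toSpanSingleton ℚ _ (gen X (Fin.cons v₀ υ.1))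

noncomputable def Pmap (Y X : Set (Finset V)) (t : ℕ) : Chains Y t →ₗ[ℚ] Chains X t :=
  Finsupp.lsum ℚ fun τ => LinearMap.toSpanSingleton ℚ _ (gen X τ.1)

noncomputable def Imap (X Y : Set (Finset V)) (h : X ⊆ Y) (t : ℕ) :
    Chains X t →ₗ[ℚ] Chains Y t :=
  Finsupp.lmapDomain ℚ ℚ (fun τ => ⟨τ.1, h τ.2⟩)

lemma Kmap_single {X Y : Set (Finset V)} (v₀ : V) {t : ℕ} (υ : Tup Y t) :
    Kmap X Y v₀ t (Finsupp.single υ 1) = gen X (Fin.cons v₀ υ.1) := by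
  simp [Kmap, Finsupp.lsum_single, LinearMap.toSpanSingleton_apply]

lemma Pmap_single {Y X : Set (Finset V)} {t : ℕ} (τ : Tup Y t) :
    Pmap Y X t (Finsupp.single τ 1) = gen X τ.1 := by
  simp [Pmap, Finsupp.lsum_single, LinearMap.toSpanSingleton_apply]

lemma Imap_single {X Y : Set (Finset V)} (h : X ⊆ Y) {t : ℕ} (τ : Tup X t) :
    Imap X Y h t (Finsupp.single τ 1) = Finsupp.single ⟨τ.1, h τ.2⟩ 1 := by
  erw [Imap, Finsupp.lmapDomain_apply, Finsupp.mapDomain_single]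

lemma Imap_injective {X Y : Set (Finset V)} (h : X ⊆ Y) (t : ℕ) :
    Function.Injective (Imap X Y h t) := by
  apply Finsupp.mapDomain_injective
  intro a b hab
  have h2 := congrArg (fun z : Tup Y t => z.1) hab
  exact Subtype.ext h2

lemma Kmap_gen {X Y : Set (Finset V)} (v₀ : V)
    (hKey : ∀ s : Finset V, insert v₀ s ∈ X ↔ s ∈ Y) {t : ℕ} (w : Fin t → V) :
    Kmap X Y v₀ t (gen Y w) = gen X (Fin.cons v₀ w) := by
  by_cases h : Finset.image w Finset.univ ∈ Y
  · erw [gen_of_mem w h, Kmap_single]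
  · rw [gen_of_not_mem w h, map_zero, gen_of_not_mem]
    rw [image_cons, hKey]
    exact h

end Stmt13Aux


namespace Chunk2
open Stmt13Aux

variable {V : Type*} [DecidableEq V]

lemma cons_comp_succ {n : ℕ} (v₀ : V) (τ : Fin n → V) :
    (Fin.cons v₀ τ : Fin (n+1) → V) ∘ Fin.succ = τ := by
  funext k; simp

lemma cons_comp_succAbove_succ {n : ℕ} (v₀ : V) (τ : Fin (n+1) → V) (j : Fin (n+1)) :
    (Fin.cons v₀ τ : Fin (n+2) → V) ∘ (Fin.succ j).succAbove
      = Fin.cons v₀ (τ ∘ j.succAbove) := by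
  funext k
  induction k using Fin.cases with
  | zero => simp [Fin.succ_succAbove_zero]
  | succ k' => simp [Fin.succ_succAbove_succ]

lemma bdry_gen_face {X : Set (Finset V)}
    (hX : ∀ s t u : Finset V, u ⊆ t → t ⊆ s → s ∈ X → t ∉ X → u ∉ X)
    {n : ℕ} (σ : Tup X (n+2)) (i : Fin (n+2)) :
    bdry X n (gen X (σ.1 ∘ i.succAbove))
      = ∑ j : Fin (n+1), ((-1:ℚ)^(j:ℕ)) • gen X (σ.1 ∘ i.succAbove ∘ j.succAbove) := by
  by_cases h : Finset.image (σ.1 ∘ i.succAbove) Finset.univ ∈ X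
  · erw [gen_of_mem _ h, bdry_single]
    rfl
  · rw [gen_of_not_mem _ h, map_zero]
    symm
    apply Finset.sum_eq_zero
    intro j _
    rw [gen_of_not_mem, smul_zero]
    refine hX _ _ _ ?_ (image_comp_subset σ.1 i.succAbove) σ.2 h
    rw [show σ.1 ∘ i.succAbove ∘ j.succAbove = (σ.1 ∘ i.succAbove) ∘ j.succAbove from rfl]
    exact image_comp_subset _ _

lemma bdry_bdry {X : Set (Finset V)}
    (hX : ∀ s t u : Finset V, u ⊆ t → t ⊆ s → s ∈ X → t ∉ X → u ∉ X)
    (n : ℕ) (x : Chains X (n+2)) :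
    bdry X n (bdry X (n+1) x) = 0 := by
  have : (bdry X n).comp (bdry X (n+1)) = (0 : Chains X (n+2) →ₗ[ℚ] Chains X n) := by
    apply lhom_ext1
    intro σ
    simp only [LinearMap.comp_apply, LinearMap.zero_apply, bdry_single, map_sum,
      LinearMap.map_smul]
    calc ∑ i : Fin (n+2), ((-1:ℚ)^(i:ℕ)) • bdry X n (gen X (σ.1 ∘ i.succAbove))
        = ∑ i : Fin (n+2), ∑ j : Fin (n+1),
            ((-1:ℚ)^((i:ℕ)+(j:ℕ))) • gen X (σ.1 ∘ i.succAbove ∘ j.succAbove) := by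
          refine Finset.sum_congr rfl fun i _ => ?_
          rw [bdry_gen_face hX σ i, Finset.smul_sum]
          refine Finset.sum_congr rfl fun j _ => ?_
          rw [smul_smul, ← pow_add]
      _ = 0 := pairing _ _
  exact LinearMap.congr_fun this x

lemma K_identity {X Y : Set (Finset V)} (v₀ : V)
    (hKey : ∀ s : Finset V, insert v₀ s ∈ X ↔ s ∈ Y) (n : ℕ) (x : Chains Y (n+1)) :
    bdry X (n+1) (Kmap X Y v₀ (n+1) x)
      = Pmap Y X (n+1) x - Kmap X Y v₀ n (bdry Y n x) := by
  have : (bdry X (n+1)).comp (Kmap X Y v₀ (n+1))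
      = Pmap Y X (n+1) - (Kmap X Y v₀ n).comp (bdry Y n) := by
    apply lhom_ext1
    intro υ
    have hc : Finset.image (Fin.cons v₀ υ.1 : Fin (n+2) → V) Finset.univ ∈ X := by
      rw [image_cons, hKey]; exact υ.2
    simp only [LinearMap.comp_apply, LinearMap.sub_apply]
    erw [Kmap_single, gen_of_mem _ hc, bdry_single, Pmap_single, bdry_single]
    rw [map_sum]
    have h0 : ∀ j : Fin (n+1),
        Kmap X Y v₀ n (((-1:ℚ)^(j:ℕ)) • gen Y (υ.1 ∘ j.succAbove))
          = ((-1:ℚ)^(j:ℕ)) • gen X (Fin.cons v₀ (υ.1 ∘ j.succAbove)) := by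
      intro j
      rw [LinearMap.map_smul, Kmap_gen v₀ hKey]
    rw [Fin.sum_univ_succ]
    have e0 : (⟨Fin.cons v₀ υ.1, hc⟩ : Tup X (n+2)).1 ∘ (0 : Fin (n+2)).succAbove = υ.1 := by
      rw [Fin.succAbove_zero]; exact cons_comp_succ v₀ υ.1
    have eS : ∀ j : Fin (n+1),
        (⟨Fin.cons v₀ υ.1, hc⟩ : Tup X (n+2)).1 ∘ (Fin.succ j).succAbove
          = Fin.cons v₀ (υ.1 ∘ j.succAbove) := fun j => cons_comp_succAbove_succ v₀ υ.1 j
    rw [e0]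
    simp only [eS, Fin.val_zero, pow_zero, one_smul, Fin.val_succ, h0, pow_succ,
      mul_smul, neg_one_smul, smul_neg]
    rw [sub_eq_add_neg, ← Finset.sum_neg_distrib]
  exact LinearMap.congr_fun this x

end Chunk2

namespace Chunk3
open Stmt13Aux Chunk2

variable {V : Type*} [DecidableEq V]

lemma gen_eq_Imap_gen {X Y : Set (Finset V)} (h : X ⊆ Y) {t : ℕ} (w : Fin t → V)
    (hw : Finset.image w Finset.univ ∈ Y → Finset.image w Finset.univ ∈ X) :
    gen Y w = Imap X Y h t (gen X w) := by
  by_cases hm : Finset.image w Finset.univ ∈ X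
  · erw [gen_of_mem _ hm, Imap_single, gen_of_mem _ (h hm)]
  · rw [gen_of_not_mem _ hm, map_zero, gen_of_not_mem _ (fun hy => hm (hw hy))]

lemma Imap_bdry {X Y : Set (Finset V)} (h : X ⊆ Y)
    (hface : ∀ s t : Finset V, t ⊆ s → s ∈ X → t ∈ Y → t ∈ X) (n : ℕ)
    (x : Chains X (n+1)) :
    bdry Y n (Imap X Y h (n+1) x) = Imap X Y h n (bdry X n x) := by
  have : (bdry Y n).comp (Imap X Y h (n+1)) = (Imap X Y h n).comp (bdry X n) := by
    apply lhom_ext1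
    intro σ
    simp only [LinearMap.comp_apply]
    erw [Imap_single, bdry_single, bdry_single, map_sum]
    refine Finset.sum_congr rfl fun j _ => ?_
    rw [LinearMap.map_smul]
    congr 1
    exact gen_eq_Imap_gen h _ (fun hy => hface _ _ (image_comp_subset σ.1 j.succAbove) σ.2 hy)
  exact LinearMap.congr_fun this x

lemma Pmap_gen {Y X : Set (Finset V)} {t : ℕ} (w : Fin t → V)
    (hw : Finset.image w Finset.univ ∈ Y) :
    Pmap Y X t (gen Y w) = gen X w := by
  erw [gen_of_mem _ hw, Pmap_single]

lemma Pmap_bdry {Y X : Set (Finset V)}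
    (hYdown : ∀ s t : Finset V, t ⊆ s → s ∈ Y → t ∈ Y)
    (hP : ∀ s t : Finset V, t ⊆ s → s ∈ Y → s ∉ X → t ∉ X) (n : ℕ)
    (x : Chains Y (n+1)) :
    bdry X n (Pmap Y X (n+1) x) = Pmap Y X n (bdry Y n x) := by
  have : (bdry X n).comp (Pmap Y X (n+1)) = (Pmap Y X n).comp (bdry Y n) := by
    apply lhom_ext1
    intro σ
    simp only [LinearMap.comp_apply]
    rw [Pmap_single, bdry_single, map_sum]
    have hR : ∀ j : Fin (n+1),
        Pmap Y X n (((-1:ℚ)^(j:ℕ)) • gen Y (σ.1 ∘ j.succAbove))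
          = ((-1:ℚ)^(j:ℕ)) • gen X (σ.1 ∘ j.succAbove) := by
      intro j
      rw [LinearMap.map_smul, Pmap_gen _ (hYdown _ _ (image_comp_subset σ.1 j.succAbove) σ.2)]
    simp only [hR]
    by_cases hm : Finset.image σ.1 Finset.univ ∈ X
    · erw [gen_of_mem _ hm, bdry_single]
    · rw [gen_of_not_mem _ hm, map_zero]
      symm
      apply Finset.sum_eq_zero
      intro j _
      rw [gen_of_not_mem _ (hP _ _ (image_comp_subset σ.1 j.succAbove) σ.2 hm), smul_zero]
  exact LinearMap.congr_fun this x

end Chunk3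

namespace Chunk4
open Stmt13Aux Chunk2 Chunk3

variable {V : Type*} [DecidableEq V]

lemma mem_sub {T F : Finset V} {s : Finset V} : s ∈ sub T F ↔ s ⊆ F ∧ T ⊆ s := Iff.rfl

lemma hered_sub (T F : Finset V) :
    ∀ s t u : Finset V, u ⊆ t → t ⊆ s → s ∈ sub T F → t ∉ sub T F → u ∉ sub T F := by
  rintro s t u hut hts ⟨hsF, hTs⟩ ht ⟨huF, hTu⟩
  exact ht ⟨hts.trans hsF, hTu.trans hut⟩

lemma Pmap_id (X : Set (Finset V)) (t : ℕ) (x : Chains X t) : Pmap X X t x = x := by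
  have : Pmap X X t = LinearMap.id := by
    apply lhom_ext1
    intro τ
    rw [Pmap_single, gen_of_mem _ τ.2]
    rfl
  rw [this]; rfl

lemma Pmap_Imap_id {X Y : Set (Finset V)} (h : X ⊆ Y) (t : ℕ) (x : Chains X t) :
    Pmap Y X t (Imap X Y h t x) = x := by
  have : (Pmap Y X t).comp (Imap X Y h t) = LinearMap.id := by
    apply lhom_ext1
    intro τ
    simp only [LinearMap.comp_apply]
    erw [Imap_single, Pmap_single, gen_of_mem _ τ.2]
    rfl
  have := LinearMap.congr_fun this x
  simpa using this

/-- Base case: `T = ∅`. -/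
lemma acyclic_base (F : Finset V) (n : ℕ) (z : Chains (sub (∅ : Finset V) F) (n+1))
    (hz : bdry (sub ∅ F) n z = 0) :
    ∃ u : Chains (sub (∅ : Finset V) F) (n+2), bdry (sub ∅ F) (n+1) u = z := by
  rcases F.eq_empty_or_nonempty with rfl | ⟨v₀, hv₀⟩
  · refine ⟨0, ?_⟩
    rw [map_zero]
    symm
    apply Finsupp.ext
    intro τ
    exfalso
    have h0 : τ.1 0 ∈ Finset.image τ.1 Finset.univ :=
      Finset.mem_image_of_mem _ (Finset.mem_univ 0)
    have := τ.2.1 h0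
    simp at this
  · have hKey : ∀ s : Finset V, insert v₀ s ∈ sub (∅ : Finset V) F ↔ s ∈ sub ∅ F := by
      intro s
      simp only [mem_sub, Finset.empty_subset, and_true, Finset.insert_subset_iff]
      constructor
      · exact fun hs => fun x hx => hs.2 hx
      · exact fun hs => ⟨hv₀, hs⟩
    refine ⟨Kmap _ _ v₀ (n+1) z, ?_⟩
    rw [K_identity v₀ hKey n z, hz, map_zero, sub_zero, Pmap_id]

lemma acyclic_sub : ∀ (c : ℕ) (T F : Finset V), T.card ≤ c → T ⊆ F → ∀ (n : ℕ), T.card ≤ n →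
    ∀ z : Chains (sub T F) (n+1), bdry (sub T F) n z = 0 →
    ∃ u : Chains (sub T F) (n+2), bdry (sub T F) (n+1) u = z := by
  intro c
  induction c with
  | zero =>
    intro T F hc hTF n hn z hz
    have hT : T = ∅ := Finset.card_eq_zero.mp (Nat.le_zero.mp hc)
    subst hT
    exact acyclic_base F n z hz
  | succ c ih =>
    intro T F hc hTF n hn z hz
    rcases T.eq_empty_or_nonempty with rfl | hTne
    · exact acyclic_base F n z hz
    obtain ⟨v₀, hv₀⟩ := hTne
    have hTpos : 1 ≤ T.card := Finset.card_pos.mpr ⟨v₀, hv₀⟩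
    obtain ⟨n', rfl⟩ : ∃ n', n = n'+1 := ⟨n-1, by omega⟩
    have hv₀F : v₀ ∈ F := hTF hv₀
    have hKey : ∀ s : Finset V, insert v₀ s ∈ sub T F ↔ s ∈ sub (T.erase v₀) F := by
      intro s
      simp only [mem_sub, Finset.insert_subset_iff]
      constructor
      · rintro ⟨⟨-, hsF⟩, hTs⟩
        refine ⟨hsF, fun u hu => ?_⟩
        have hu' := hTs (Finset.mem_of_mem_erase hu)
        rcases Finset.mem_insert.mp hu' with rfl | h
        · exact absurd rfl (Finset.ne_of_mem_erase hu)
        · exact h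
      · rintro ⟨hsF, hTs⟩
        refine ⟨⟨hv₀F, hsF⟩, fun u hu => ?_⟩
        rcases eq_or_ne u v₀ with rfl | hne
        · exact Finset.mem_insert_self _ _
        · exact Finset.mem_insert_of_mem (hTs (Finset.mem_erase.mpr ⟨hne, hu⟩))
    have hXY : sub T F ⊆ sub (T.erase v₀) F := by
      rintro s ⟨hsF, hTs⟩
      exact ⟨hsF, (Finset.erase_subset _ _).trans hTs⟩
    have hX'Y : sub (T.erase v₀) (F.erase v₀) ⊆ sub (T.erase v₀) F := by
      rintro s ⟨hsF, hTs⟩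
      exact ⟨hsF.trans (Finset.erase_subset _ _), hTs⟩
    have hfaceX' : ∀ s t : Finset V, t ⊆ s → s ∈ sub (T.erase v₀) (F.erase v₀) →
        t ∈ sub (T.erase v₀) F → t ∈ sub (T.erase v₀) (F.erase v₀) :=
      fun s t hts hs ht => ⟨fun x hx => (hs.1 (hts hx) : _), ht.2⟩
    -- the defect chain
    set Ez : Chains (sub (T.erase v₀) F) (n'+1) :=
      bdry (sub (T.erase v₀) F) (n'+1) (Imap (sub T F) (sub (T.erase v₀) F) hXY (n'+2) z)
      with hEz
    have hEz_cycle : bdry (sub (T.erase v₀) F) n' Ez = 0 :=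
      bdry_bdry (hered_sub (T.erase v₀) F) n' _
    -- Ez is supported on tuples avoiding v₀, i.e. comes from sub (T.erase v₀) (F.erase v₀)
    have hsupp : Imap (sub (T.erase v₀) (F.erase v₀)) (sub (T.erase v₀) F) hX'Y (n'+1)
        (Pmap (sub (T.erase v₀) F) (sub (T.erase v₀) (F.erase v₀)) (n'+1) Ez) = Ez := by
      have hop : (Imap (sub (T.erase v₀) (F.erase v₀)) (sub (T.erase v₀) F) hX'Y (n'+1)).comp
            ((Pmap (sub (T.erase v₀) F) (sub (T.erase v₀) (F.erase v₀)) (n'+1)).comp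
              ((bdry (sub (T.erase v₀) F) (n'+1)).comp
                  (Imap (sub T F) (sub (T.erase v₀) F) hXY (n'+2))
                - (Imap (sub T F) (sub (T.erase v₀) F) hXY (n'+1)).comp (bdry (sub T F) (n'+1))))
          = (bdry (sub (T.erase v₀) F) (n'+1)).comp
                (Imap (sub T F) (sub (T.erase v₀) F) hXY (n'+2))
              - (Imap (sub T F) (sub (T.erase v₀) F) hXY (n'+1)).comp (bdry (sub T F) (n'+1)) := by
        apply lhom_ext1
        intro σ
        simp only [LinearMap.comp_apply, LinearMap.sub_apply]
        erw [Imap_single, bdry_single]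
        rw [bdry_single, map_sum]
        rw [← Finset.sum_sub_distrib, map_sum, map_sum]
        refine Finset.sum_congr rfl fun j _ => ?_
        rw [LinearMap.map_smul, ← smul_sub, LinearMap.map_smul, LinearMap.map_smul]
        congr 1
        have hwsub : Finset.image (σ.1 ∘ j.succAbove) Finset.univ
            ⊆ Finset.image σ.1 Finset.univ := image_comp_subset _ _
        by_cases hmX : Finset.image (σ.1 ∘ j.succAbove) Finset.univ ∈ sub T F
        · erw [gen_of_mem _ hmX, Imap_single, gen_of_mem _ (hXY hmX)]
          simp
        · by_cases hmY : Finset.image (σ.1 ∘ j.succAbove) Finset.univ ∈ sub (T.erase v₀) F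
          · rw [gen_of_mem _ hmY, gen_of_not_mem _ hmX, map_zero, sub_zero]
            have hmX' : Finset.image (σ.1 ∘ j.succAbove) Finset.univ
                ∈ sub (T.erase v₀) (F.erase v₀) := by
              refine ⟨fun x hx => Finset.mem_erase.mpr ⟨?_, hmY.1 hx⟩, hmY.2⟩
              intro hxv
              refine hmX ⟨(hwsub.trans σ.2.1 : _), fun u hu => ?_⟩
              rcases eq_or_ne u v₀ with rfl | hne
              · exact hxv ▸ hx
              · exact hmY.2 (Finset.mem_erase.mpr ⟨hne, hu⟩)
            erw [Pmap_single, gen_of_mem _ hmX', Imap_single]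
          · rw [gen_of_not_mem _ hmY, gen_of_not_mem _ hmX]
            simp
      have := LinearMap.congr_fun hop z
      simp only [LinearMap.comp_apply, LinearMap.sub_apply, hz, map_zero, sub_zero] at this
      exact this
    have hy'_cycle : bdry (sub (T.erase v₀) (F.erase v₀)) n'
        (Pmap (sub (T.erase v₀) F) (sub (T.erase v₀) (F.erase v₀)) (n'+1) Ez) = 0 := by
      apply Imap_injective hX'Y n'
      rw [map_zero, ← Imap_bdry hX'Y hfaceX' n' _, hsupp]
      exact hEz_cycle
    have hcards : (T.erase v₀).card ≤ c := by
      have h1 := Finset.card_erase_of_mem hv₀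
      omega
    have hT'F' : T.erase v₀ ⊆ F.erase v₀ := fun u hu =>
      Finset.mem_erase.mpr ⟨(Finset.mem_erase.mp hu).1, hTF (Finset.mem_erase.mp hu).2⟩
    have hn' : (T.erase v₀).card ≤ n' := by
      have h1 := Finset.card_erase_of_mem hv₀
      omega
    obtain ⟨u', hu'⟩ := ih (T.erase v₀) (F.erase v₀) hcards hT'F' n' hn' _ hy'_cycle
    -- assemble
    have hPe0 : ∀ (t : ℕ) (x : Chains (sub (T.erase v₀) (F.erase v₀)) t),
        Pmap (sub (T.erase v₀) F) (sub T F) t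
          (Imap (sub (T.erase v₀) (F.erase v₀)) (sub (T.erase v₀) F) hX'Y t x) = 0 := by
      intro t x
      have h0 : (Pmap (sub (T.erase v₀) F) (sub T F) t).comp
          (Imap (sub (T.erase v₀) (F.erase v₀)) (sub (T.erase v₀) F) hX'Y t) = 0 := by
        apply lhom_ext1
        intro τ
        simp only [LinearMap.comp_apply, LinearMap.zero_apply]
        erw [Imap_single, Pmap_single, gen_of_not_mem]
        rintro ⟨-, hTs⟩
        have hmem := τ.2.1 (hTs hv₀)
        exact absurd hmem (Finset.notMem_erase _ _)
      exact LinearMap.congr_fun h0 x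
    have hcomm : Imap (sub (T.erase v₀) (F.erase v₀)) (sub (T.erase v₀) F) hX'Y (n'+1)
          (bdry (sub (T.erase v₀) (F.erase v₀)) (n'+1) u')
        = bdry (sub (T.erase v₀) F) (n'+1)
            (Imap (sub (T.erase v₀) (F.erase v₀)) (sub (T.erase v₀) F) hX'Y (n'+2) u') := by
      rw [Imap_bdry hX'Y hfaceX']
    refine ⟨Kmap (sub T F) (sub (T.erase v₀) F) v₀ (n'+2)
        (Imap (sub T F) (sub (T.erase v₀) F) hXY (n'+2) z)
      - Kmap (sub T F) (sub (T.erase v₀) F) v₀ (n'+2)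
        (Imap (sub (T.erase v₀) (F.erase v₀)) (sub (T.erase v₀) F) hX'Y (n'+2) u'), ?_⟩
    rw [map_sub]
    rw [K_identity v₀ hKey (n'+1)]
    rw [K_identity v₀ hKey (n'+1)]
    rw [Pmap_Imap_id hXY, hPe0]
    have hlast : bdry (sub (T.erase v₀) F) (n'+1)
        (Imap (sub (T.erase v₀) (F.erase v₀)) (sub (T.erase v₀) F) hX'Y (n'+2) u') = Ez := by
      rw [← hcomm, hu', hsupp]
    rw [hlast, hEz]
    abel

end Chunk4

namespace Chunk5
open Stmt13Aux Chunk2 Chunk3 Chunk4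

variable {V : Type*} [DecidableEq V]

lemma vanishes_of_exact {X : Set (Finset V)} (i : ℕ)
    (h : ∀ z : Chains X (i+1), bdry X i z = 0 → ∃ u, bdry X (i+1) u = z) :
    ∀ x : (LinearMap.ker (bdry X i) ⧸
      Submodule.comap (LinearMap.ker (bdry X i)).subtype (LinearMap.range (bdry X (i + 1)))),
      x = 0 := by
  intro x
  obtain ⟨⟨y, hy⟩, rfl⟩ := Submodule.Quotient.mk_surjective _ x
  rw [Submodule.Quotient.mk_eq_zero, Submodule.mem_comap]
  obtain ⟨u, hu⟩ := h y (LinearMap.mem_ker.mp hy)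
  exact ⟨u, hu⟩

section Boundary

def Xb (m : ℕ) : Set (Finset (Fin m)) := {t | t ≠ Finset.univ}

variable (m : ℕ)

local notation "Y₀" => sub (∅ : Finset (Fin m)) Finset.univ
local notation "Yu" => sub (Finset.univ : Finset (Fin m)) Finset.univ

lemma hXsub : Xb m ⊆ Y₀ := fun s _ => ⟨Finset.subset_univ s, Finset.empty_subset s⟩

lemma hUs : Yu ⊆ Y₀ := fun s hs => ⟨hs.1, Finset.empty_subset s⟩

lemma mem_Yu_iff (s : Finset (Fin m)) : s ∈ Yu ↔ s = Finset.univ := by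
  constructor
  · rintro ⟨-, h⟩
    exact Finset.univ_subset_iff.mp h
  · rintro rfl
    exact ⟨le_rfl, le_rfl⟩

lemma hfaceX : ∀ s t : Finset (Fin m), t ⊆ s → s ∈ Xb m → t ∈ Y₀ → t ∈ Xb m := by
  intro s t hts hs _
  intro h
  exact hs (Finset.univ_subset_iff.mp (h ▸ hts))

lemma id_decomp (t : ℕ) (x : Chains Y₀ t) :
    Imap (Xb m) Y₀ (hXsub m) t (Pmap Y₀ (Xb m) t x)
      + Imap Yu Y₀ (hUs m) t (Pmap Y₀ Yu t x) = x := by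
  have hop : (Imap (Xb m) Y₀ (hXsub m) t).comp (Pmap Y₀ (Xb m) t)
      + (Imap Yu Y₀ (hUs m) t).comp (Pmap Y₀ Yu t) = LinearMap.id := by
    apply lhom_ext1
    intro τ
    simp only [LinearMap.add_apply, LinearMap.comp_apply, LinearMap.id_apply]
    rw [Pmap_single, Pmap_single]
    by_cases h : Finset.image τ.1 Finset.univ = Finset.univ
    · erw [gen_of_not_mem (X := Xb m) _ (fun hXb => hXb h), map_zero, zero_add,
        gen_of_mem _ ((mem_Yu_iff m _).mpr h), Imap_single]
      rfl
    · erw [gen_of_mem (X := Xb m) _ h, gen_of_not_mem _ (fun hy => h ((mem_Yu_iff m _).mp hy)),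
        map_zero, add_zero, Imap_single]
      rfl
  exact LinearMap.congr_fun hop x

lemma piota (t : ℕ) (x : Chains (Xb m) t) :
    Pmap Y₀ Yu t (Imap (Xb m) Y₀ (hXsub m) t x) = 0 := by
  have hop : (Pmap Y₀ Yu t).comp (Imap (Xb m) Y₀ (hXsub m) t) = 0 := by
    apply lhom_ext1
    intro τ
    simp only [LinearMap.comp_apply, LinearMap.zero_apply]
    erw [Imap_single, Pmap_single, gen_of_not_mem]
    intro hy
    exact τ.2 ((mem_Yu_iff m _).mp hy)
  exact LinearMap.congr_fun hop x

theorem vanish_high (i : ℕ) (hm2 : 2 ≤ m) (hi : m ≤ i + 1) :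
    ∀ z : Chains (Xb m) (i+1), bdry (Xb m) i z = 0 → ∃ u, bdry (Xb m) (i+1) u = z := by
  intro z hz
  have hm0 : 0 < m := by omega
  set v₀ : Fin m := ⟨0, hm0⟩ with hv₀def
  have hKey₀ : ∀ s : Finset (Fin m), insert v₀ s ∈ Y₀ ↔ s ∈ Y₀ := by
    intro s
    simp [mem_sub]
  have hιchain : ∀ (n : ℕ) (x : Chains (Xb m) (n+1)),
      bdry Y₀ n (Imap (Xb m) Y₀ (hXsub m) (n+1) x) = Imap (Xb m) Y₀ (hXsub m) n (bdry (Xb m) n x) :=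
    fun n x => Imap_bdry (hXsub m) (hfaceX m) n x
  have hπchain : ∀ (n : ℕ) (x : Chains Y₀ (n+1)),
      bdry Yu n (Pmap Y₀ Yu (n+1) x) = Pmap Y₀ Yu n (bdry Y₀ n x) := by
    intro n x
    refine Pmap_bdry ?_ ?_ n x
    · intro s t hts hs
      exact ⟨hts.trans hs.1, Finset.empty_subset t⟩
    · intro s t hts hs hsX htX
      exact hsX ⟨hs.1, htX.2.trans hts⟩
  set ιz : Chains Y₀ (i+1) := Imap (Xb m) Y₀ (hXsub m) (i+1) z with hιz
  set w : Chains Y₀ (i+2) := Kmap Y₀ Y₀ v₀ (i+1) ιz with hwdef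
  have hw : bdry Y₀ (i+1) w = ιz := by
    rw [hwdef, K_identity v₀ hKey₀ i ιz, Pmap_id, hιz, hιchain i z, hz, map_zero, map_zero,
      sub_zero]
  -- project to the surjective part and kill it by acyclicity
  have hcycle : bdry Yu (i+1) (Pmap Y₀ Yu (i+2) w) = 0 := by
    rw [hπchain (i+1) w, hw, hιz, piota]
  have hcardu : (Finset.univ : Finset (Fin m)).card = m := by
    simp
  obtain ⟨u, hu⟩ := acyclic_sub m Finset.univ Finset.univ (le_of_eq hcardu)
    le_rfl (i+1) (by omega) (Pmap Y₀ Yu (i+2) w) hcycle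
  set w' : Chains Y₀ (i+2) := w - bdry Y₀ (i+2) (Imap Yu Y₀ (hUs m) (i+3) u) with hw'def
  have hπw' : Pmap Y₀ Yu (i+2) w' = 0 := by
    rw [hw'def, map_sub, ← hπchain (i+2) (Imap Yu Y₀ (hUs m) (i+3) u),
      Pmap_Imap_id (hUs m), hu, sub_self]
  have hlift : Imap (Xb m) Y₀ (hXsub m) (i+2) (Pmap Y₀ (Xb m) (i+2) w') = w' := by
    have := id_decomp m (i+2) w'
    rw [hπw', map_zero, add_zero] at this
    exact this
  refine ⟨Pmap Y₀ (Xb m) (i+2) w', ?_⟩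
  apply Imap_injective (hXsub m) (i+1)
  rw [← hιchain (i+1) (Pmap Y₀ (Xb m) (i+2) w'), hlift, hw'def, map_sub, hw,
    bdry_bdry (hered_sub ∅ Finset.univ) (i+1) (Imap Yu Y₀ (hUs m) (i+3) u), sub_zero, hιz]

end Boundary
end Chunk5

namespace Chunk6
open Stmt13Aux Chunk2 Chunk3 Chunk4 Chunk5

variable {V : Type*} [DecidableEq V]

lemma cone_exact {X : Set (Finset V)} (hdc : ∀ s ∈ X, ∀ t ⊆ s, t ∈ X) (v₀ : V)
    (hv : ∀ s ∈ X, insert v₀ s ∈ X) (i : ℕ) :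
    ∀ z : Chains X (i+1), bdry X i z = 0 → ∃ u, bdry X (i+1) u = z := by
  intro z hz
  have hKey : ∀ s : Finset V, insert v₀ s ∈ X ↔ s ∈ X := by
    intro s
    exact ⟨fun h => hdc _ h s (Finset.subset_insert _ _), fun h => hv s h⟩
  refine ⟨Kmap X X v₀ (i+1) z, ?_⟩
  rw [K_identity v₀ hKey i z, Pmap_id, hz, map_zero, sub_zero]

lemma empty_exact {X : Set (Finset V)} (i : ℕ)
    (h : ∀ τ : Fin (i+1) → V, Finset.image τ Finset.univ ∉ X) :
    ∀ z : Chains X (i+1), bdry X i z = 0 → ∃ u, bdry X (i+1) u = z := by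
  intro z hz
  refine ⟨0, ?_⟩
  rw [map_zero]
  apply Finsupp.ext
  intro τ
  exact absurd τ.2 (h τ.1)

end Chunk6

namespace Chunk7
open Stmt13Aux Chunk2 Chunk3 Chunk4 Chunk5 Chunk6

def ee {q : ℕ} (v : Fin q) : Fin q → ℚ := fun j => if v = j then 1 else 0

lemma sum_ee {q : ℕ} (v : Fin q) : ∑ j, ee v j = 1 := by
  simp [ee]

noncomputable def Mmat {n : ℕ} (τ : Fin (n+1) → Fin (n+2)) : Matrix (Fin (n+2)) (Fin (n+2)) ℚ :=
  Matrix.of (Fin.snoc (fun k => ee (τ k)) (fun _ => (1:ℚ)))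

noncomputable def Emat {n : ℕ} (σ : Fin (n+2) → Fin (n+2)) : Matrix (Fin (n+2)) (Fin (n+2)) ℚ :=
  Matrix.of (fun i j => ee (σ i) j)

noncomputable def Nmat {n : ℕ} (σ : Fin (n+2) → Fin (n+2)) : Matrix (Fin (n+3)) (Fin (n+3)) ℚ :=
  Matrix.of (Fin.snoc (fun i : Fin (n+2) => Fin.snoc (ee (σ i)) (1:ℚ))
    (Fin.snoc (fun _ => (1:ℚ)) ((n:ℚ)+2)))

lemma det_Nmat {n : ℕ} (σ : Fin (n+2) → Fin (n+2)) : (Nmat σ).det = 0 := by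
  have hupd : (Nmat σ).updateCol (Fin.last (n+2))
      (fun k => ∑ i, (if i = Fin.last (n+2) then (0:ℚ) else 1) • Nmat σ k i) = Nmat σ := by
    apply Matrix.ext
    intro k j
    rcases eq_or_ne j (Fin.last (n+2)) with rfl | hj
    · rw [Matrix.updateCol_self]
      have hsum : ∑ i, (if i = Fin.last (n+2) then (0:ℚ) else 1) • Nmat σ k i
          = ∑ i' : Fin (n+2), Nmat σ k (Fin.castSucc i') := by
        rw [Fin.sum_univ_castSucc]
        simp [Fin.ne_of_lt (Fin.castSucc_lt_last _)]
      rw [hsum]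
      rcases Fin.eq_castSucc_or_eq_last k with ⟨k', rfl⟩ | rfl
      · have h1 : ∀ i' : Fin (n+2), Nmat σ (Fin.castSucc k') (Fin.castSucc i') = ee (σ k') i' := by
          intro i'
          simp [Nmat, Fin.snoc_castSucc]
        simp only [h1]
        rw [sum_ee]
        simp [Nmat, Fin.snoc_castSucc, Fin.snoc_last]
      · have h1 : ∀ i' : Fin (n+2), Nmat σ (Fin.last (n+2)) (Fin.castSucc i') = 1 := by
          intro i'
          simp [Nmat, Fin.snoc_castSucc, Fin.snoc_last]
        simp only [h1]
        simp [Nmat, Fin.snoc_last]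
    · rw [Matrix.updateCol_ne hj]
  have := Matrix.det_updateCol_sum (Nmat σ) (Fin.last (n+2))
    (fun i => if i = Fin.last (n+2) then (0:ℚ) else 1)
  rw [hupd] at this
  simpa using this

lemma submatrix_castSucc {n : ℕ} (σ : Fin (n+2) → Fin (n+2)) (i' : Fin (n+2)) :
    (Nmat σ).submatrix (Fin.castSucc i').succAbove Fin.castSucc = Mmat (σ ∘ i'.succAbove) := by
  apply Matrix.ext
  intro k j
  rcases Fin.eq_castSucc_or_eq_last k with ⟨k', rfl⟩ | rfl
  · rw [Matrix.submatrix_apply]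
    rw [Fin.castSucc_succAbove_castSucc]
    simp [Nmat, Mmat, Fin.snoc_castSucc]
  · rw [Matrix.submatrix_apply]
    have h1 : (Fin.castSucc i').succAbove (Fin.last (n+1)) = Fin.last (n+2) := by
      rw [Fin.succAbove_of_le_castSucc]
      · exact Fin.succ_last _
      · exact Fin.castSucc_le_castSucc_iff.mpr (Fin.le_last i')
    rw [h1]
    simp [Nmat, Mmat, Fin.snoc_castSucc, Fin.snoc_last]

lemma submatrix_last {n : ℕ} (σ : Fin (n+2) → Fin (n+2)) :
    (Nmat σ).submatrix (Fin.castSucc : Fin (n+2) → Fin (n+3)) Fin.castSucc = Emat σ := by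
  apply Matrix.ext
  intro k j
  rw [Matrix.submatrix_apply]
  simp [Nmat, Emat, Fin.snoc_castSucc]

lemma key_sum {n : ℕ} (σ : Fin (n+2) → Fin (n+2)) :
    ∑ i' : Fin (n+2), ((-1:ℚ)^(i':ℕ)) * (Mmat (σ ∘ i'.succAbove)).det
      = ((-1:ℚ)^(n+3)) * ((n:ℚ)+2) * (Emat σ).det := by
  have hexp := Matrix.det_succ_column (Nmat σ) (Fin.last (n+2))
  rw [det_Nmat σ, Fin.sum_univ_castSucc, Fin.succAbove_last, submatrix_last] at hexp
  simp only [submatrix_castSucc] at hexp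
  have hNlastcol : ∀ i' : Fin (n+2), Nmat σ (Fin.castSucc i') (Fin.last (n+2)) = 1 := by
    intro i'
    simp [Nmat, Fin.snoc_castSucc, Fin.snoc_last]
  have hNll : Nmat σ (Fin.last (n+2)) (Fin.last (n+2)) = (n:ℚ)+2 := by
    simp [Nmat, Fin.snoc_last]
  simp only [hNlastcol, hNll, mul_one, Fin.coe_castSucc, Fin.val_last] at hexp
  have hfac : ∑ i' : Fin (n+2), ((-1:ℚ)^((i':ℕ)+(n+2))) * (Mmat (σ ∘ i'.succAbove)).det
      = ((-1:ℚ)^(n+2)) * ∑ i' : Fin (n+2), ((-1:ℚ)^(i':ℕ)) * (Mmat (σ ∘ i'.succAbove)).det := by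
    rw [Finset.mul_sum]
    refine Finset.sum_congr rfl fun i' _ => ?_
    rw [pow_add]
    ring
  rw [hfac] at hexp
  have hx2 : ((-1:ℚ)^(n+2)) * ((-1:ℚ)^(n+2)) = 1 := by
    rw [← pow_add]
    exact Even.neg_one_pow ⟨n+2, by ring⟩
  have h3 : ((-1:ℚ))^(n+3) = ((-1:ℚ)^(n+2)) * (-1) := by
    rw [show n+3 = (n+2)+1 from rfl, pow_succ]
  set x : ℚ := (-1:ℚ)^(n+2) with hx
  set S : ℚ := ∑ i' : Fin (n+2), ((-1:ℚ)^(i':ℕ)) * (Mmat (σ ∘ i'.succAbove)).det with hS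
  set E : ℚ := (Emat σ).det with hE
  rw [h3]
  have h4 : ((-1:ℚ)^((n+2)+(n+2))) = 1 := Even.neg_one_pow ⟨n+2, by ring⟩
  rw [h4] at hexp
  -- hexp : 0 = x * S + 1 * ((n+2) * E)  (roughly)
  have h5 : S = x * (x * S) := by rw [← mul_assoc, hx2, one_mul]
  have h6 : x * S = -(((n:ℚ)+2) * E) := by linarith [hexp]
  rw [h5, h6]
  ring

end Chunk7

namespace Chunk8
open Stmt13Aux Chunk2 Chunk3 Chunk4 Chunk5 Chunk6 Chunk7

lemma Emat_repeat {n : ℕ} {σ : Fin (n+2) → Fin (n+2)} (h : ¬ Function.Injective σ) :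
    (Emat σ).det = 0 := by
  rw [Function.not_injective_iff] at h
  obtain ⟨a, b, hab, hne⟩ := h
  exact Matrix.det_zero_of_row_eq hne (by funext j; simp [Emat, hab])

lemma Emat_id {n : ℕ} : (Emat (id : Fin (n+2) → Fin (n+2))).det = 1 := by
  have h : Emat (id : Fin (n+2) → Fin (n+2)) = 1 := by
    apply Matrix.ext
    intro i j
    simp [Emat, ee, Matrix.one_apply]
  rw [h, Matrix.det_one]

noncomputable def phi (n : ℕ) : Chains (Xb (n+2)) (n+1) →ₗ[ℚ] ℚ :=
  Finsupp.lsum ℚ fun τ => LinearMap.toSpanSingleton ℚ ℚ (Mmat τ.1).det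

lemma phi_single {n : ℕ} (τ : Tup (Xb (n+2)) (n+1)) :
    phi n (Finsupp.single τ 1) = (Mmat τ.1).det := by
  simp [phi, Finsupp.lsum_single, LinearMap.toSpanSingleton_apply]

lemma Xb_down {m : ℕ} {s t : Finset (Fin m)} (hts : t ⊆ s) (hs : s ∈ Xb m) : t ∈ Xb m :=
  hfaceX m s t hts hs ⟨Finset.subset_univ t, Finset.empty_subset t⟩

lemma not_inj_of_mem_Xb {n : ℕ} {σ : Fin (n+2) → Fin (n+2)}
    (h : Finset.image σ Finset.univ ∈ Xb (n+2)) : ¬ Function.Injective σ := by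
  intro hinj
  apply h
  apply Finset.eq_univ_of_card
  rw [Finset.card_image_of_injective _ hinj]
  simp

lemma phi_bdry {n : ℕ} (x : Chains (Xb (n+2)) (n+2)) : phi n (bdry (Xb (n+2)) (n+1) x) = 0 := by
  have hop : (phi n).comp (bdry (Xb (n+2)) (n+1)) = 0 := by
    apply lhom_ext1
    intro σ
    simp only [LinearMap.comp_apply, LinearMap.zero_apply]
    rw [bdry_single, map_sum]
    have hterm : ∀ j : Fin (n+2),
        phi n (((-1:ℚ)^(j:ℕ)) • gen (Xb (n+2)) (σ.1 ∘ j.succAbove))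
          = ((-1:ℚ)^(j:ℕ)) * (Mmat (σ.1 ∘ j.succAbove)).det := by
      intro j
      erw [LinearMap.map_smul, gen_of_mem _ (Xb_down (image_comp_subset σ.1 j.succAbove) σ.2),
        phi_single, smul_eq_mul]
    simp only [hterm]
    rw [key_sum σ.1, Emat_repeat (not_inj_of_mem_Xb σ.2), mul_zero]
  exact LinearMap.congr_fun hop x

lemma mem_face {n : ℕ} (i : Fin (n+2)) :
    Finset.image (Fin.succAbove i) Finset.univ ∈ Xb (n+2) := by
  intro h
  have hmem : i ∈ Finset.image (Fin.succAbove i) Finset.univ := h ▸ Finset.mem_univ i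
  obtain ⟨k, -, hk⟩ := Finset.mem_image.mp hmem
  exact Fin.succAbove_ne i k hk

noncomputable def cyc (n : ℕ) : Chains (Xb (n+2)) (n+1) :=
  ∑ i : Fin (n+2), ((-1:ℚ)^(i:ℕ)) • gen (Xb (n+2)) (Fin.succAbove i)

lemma phi_cyc (n : ℕ) : phi n (cyc n) = ((-1:ℚ)^(n+3)) * ((n:ℚ)+2) := by
  rw [cyc, map_sum]
  have hterm : ∀ i : Fin (n+2),
      phi n (((-1:ℚ)^(i:ℕ)) • gen (Xb (n+2)) (Fin.succAbove i))
        = ((-1:ℚ)^(i:ℕ)) * (Mmat ((id : Fin (n+2) → Fin (n+2)) ∘ Fin.succAbove i)).det := by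
    intro i
    erw [LinearMap.map_smul, gen_of_mem _ (mem_face i), phi_single, smul_eq_mul,
      Function.id_comp]
  simp only [hterm]
  rw [key_sum id, Emat_id, mul_one]

lemma cyc_cycle (n : ℕ) : bdry (Xb (n+2)) n (cyc n) = 0 := by
  rw [cyc, map_sum]
  have hterm : ∀ i : Fin (n+2),
      bdry (Xb (n+2)) n (((-1:ℚ)^(i:ℕ)) • gen (Xb (n+2)) (Fin.succAbove i))
        = ∑ j : Fin (n+1), ((-1:ℚ)^((i:ℕ)+(j:ℕ)))
            • gen (Xb (n+2)) ((id : Fin (n+2) → Fin (n+2)) ∘ i.succAbove ∘ j.succAbove) := by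
    intro i
    erw [LinearMap.map_smul, gen_of_mem _ (mem_face i), bdry_single, Finset.smul_sum]
    refine Finset.sum_congr rfl fun j _ => ?_
    rw [smul_smul, ← pow_add]
    rfl
  simp only [hterm]
  exact pairing (gen (Xb (n+2))) id

theorem nonvanish (n : ℕ) :
    ¬ (∀ x : (LinearMap.ker (bdry (Xb (n+2)) n) ⧸
        Submodule.comap (LinearMap.ker (bdry (Xb (n+2)) n)).subtype
          (LinearMap.range (bdry (Xb (n+2)) (n+1)))), x = 0) := by
  intro hall
  have hker : cyc n ∈ LinearMap.ker (bdry (Xb (n+2)) n) := LinearMap.mem_ker.mpr (cyc_cycle n)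
  have h0 := hall (Submodule.Quotient.mk ⟨cyc n, hker⟩)
  rw [Submodule.Quotient.mk_eq_zero, Submodule.mem_comap] at h0
  obtain ⟨u, hu⟩ := h0
  have h1 : phi n (cyc n) = 0 := by
    have : (LinearMap.ker (bdry (Xb (n+2)) n)).subtype ⟨cyc n, hker⟩ = cyc n := rfl
    rw [this] at hu
    rw [← hu, phi_bdry]
  rw [phi_cyc] at h1
  have h2 : ((-1:ℚ)^(n+3)) * ((n:ℚ)+2) ≠ 0 := by
    apply mul_ne_zero
    · exact pow_ne_zero _ (by norm_num)
    · positivity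
  exact h2 h1

end Chunk8

namespace Chunk9
open Stmt13Aux Chunk2 Chunk3 Chunk4 Chunk5 Chunk6 Chunk7 Chunk8

theorem stmt13_aux (r d m : ℕ) (hr : 1 ≤ r) (hd : 2 ≤ d) (hm : m = r * d)
    (A : Fin r → Finset (Fin m)) (hcardA : ∀ k, (A k).card = d)
    (hdisjA : Pairwise fun k l => Disjoint (A k) (A l))
    (hcover : ∀ i : Fin m, ∃ k, i ∈ A k) :
    imageComplex (Prod.fst : Fin m × Fin r → Fin m) (exampleCplx A) =
      {t : Finset (Fin m) | t ≠ Finset.univ} ∧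
    lerayNumber (imageComplex (Prod.fst : Fin m × Fin r → Fin m) (exampleCplx A)) =
      m - 1 := by
  have hm2 : 2 ≤ m := by
    rw [hm]
    calc 2 = 1 * 2 := by norm_num
    _ ≤ r * d := Nat.mul_le_mul hr hd
  have hpart1 : imageComplex (Prod.fst : Fin m × Fin r → Fin m) (exampleCplx A) =
      {t : Finset (Fin m) | t ≠ Finset.univ} := by
    ext t
    simp only [imageComplex, exampleCplx, Set.mem_setOf_eq, Set.mem_iUnion]
    constructor
    · rintro ⟨s, ⟨k, hk1, i, hiA, hik⟩, rfl⟩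
      intro huniv
      have hmem : i ∈ Finset.image Prod.fst s := huniv ▸ Finset.mem_univ i
      obtain ⟨v, hv, hv2⟩ := Finset.mem_image.mp hmem
      apply hik
      have hveq : v = (i, k) := Prod.ext hv2 (hk1 v hv)
      rwa [hveq] at hv
    · intro ht
      obtain ⟨i, hi⟩ : ∃ i, i ∉ t := by
        by_contra h
        push_neg at h
        exact ht (Finset.eq_univ_iff_forall.mpr h)
      obtain ⟨k, hk⟩ := hcover i
      refine ⟨t.image (fun x => (x, k)), ⟨k, ?_, i, hk, ?_⟩, ?_⟩
      · intro v hv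
        obtain ⟨x, hx, rfl⟩ := Finset.mem_image.mp hv
        rfl
      · intro hmem
        obtain ⟨x, hx, hx2⟩ := Finset.mem_image.mp hmem
        have hxi : x = i := congrArg Prod.fst hx2
        exact hi (hxi ▸ hx)
      · rw [Finset.image_image]
        have : (Prod.fst ∘ fun x : Fin m => (x, k)) = id := rfl
        rw [this, Finset.image_id]
  refine ⟨hpart1, ?_⟩
  rw [hpart1]
  have h_univ : induced {t : Finset (Fin m) | t ≠ Finset.univ} Finset.univ
      = {t : Finset (Fin m) | t ≠ Finset.univ} := by
    ext s
    simp [induced]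
  have hmemS : (m-1) ∈ {d' | ∀ S : Finset (Fin m), ∀ i, d' ≤ i →
      HomologyVanishes (induced {t : Finset (Fin m) | t ≠ Finset.univ} S) i} := by
    intro S i hi
    by_cases hS : S = Finset.univ
    · subst hS
      rw [h_univ]
      intro x
      exact vanishes_of_exact i (fun z hz => vanish_high m i hm2 (by omega) z hz) x
    · rcases S.eq_empty_or_nonempty with rfl | ⟨v₀, hv₀⟩
      · intro x
        refine vanishes_of_exact i ?_ x
        apply empty_exact
        intro τ hmem
        have h0 : τ 0 ∈ Finset.image τ Finset.univ :=
          Finset.mem_image_of_mem _ (Finset.mem_univ _)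
        have := hmem.2 h0
        simp at this
      · intro x
        refine vanishes_of_exact i ?_ x
        refine cone_exact ?_ v₀ ?_ i
        · rintro s ⟨hs1, hs2⟩ t hts
          refine ⟨?_, hts.trans hs2⟩
          intro htu
          exact hs1 (Finset.univ_subset_iff.mp (htu ▸ hts))
        · rintro s ⟨hs1, hs2⟩
          refine ⟨?_, Finset.insert_subset hv₀ hs2⟩
          intro htu
          exact hS (Finset.univ_subset_iff.mp (htu ▸ Finset.insert_subset hv₀ hs2))
  have hlb : ∀ b ∈ {d' | ∀ S : Finset (Fin m), ∀ i, d' ≤ i →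
      HomologyVanishes (induced {t : Finset (Fin m) | t ≠ Finset.univ} S) i}, m - 1 ≤ b := by
    intro b hb
    by_contra hlt
    push_neg at hlt
    have hv := hb Finset.univ (m-2) (by omega)
    rw [h_univ] at hv
    obtain ⟨n, rfl⟩ : ∃ n, m = n+2 := ⟨m-2, by omega⟩
    have hn : n+2-2 = n := by omega
    rw [hn] at hv
    exact nonvanish n hv
  rw [lerayNumber]
  apply le_antisymm
  · exact Nat.sInf_le hmemS
  · exact le_csInf ⟨m-1, hmemS⟩ hlb

end Chunk9

/-- in the example, `π(X)` is the boundary of the `(m-1)`-simplex (all proper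
subsets of `Fin m`), hence `L(π(X)) = m - 1 = rd - 1`. -/

theorem stmt13 (r d m : ℕ) (hr : 1 ≤ r) (hd : 2 ≤ d) (hm : m = r * d)
    (A : Fin r → Finset (Fin m)) (hcardA : ∀ k, (A k).card = d)
    (hdisjA : Pairwise fun k l => Disjoint (A k) (A l))
    (hcover : ∀ i : Fin m, ∃ k, i ∈ A k) :
    imageComplex (Prod.fst : Fin m × Fin r → Fin m) (exampleCplx A) =
      {t : Finset (Fin m) | t ≠ Finset.univ} ∧
    lerayNumber (imageComplex (Prod.fst : Fin m × Fin r → Fin m) (exampleCplx A)) =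
      m - 1 := Chunk9.stmt13_aux r d m hr hd hm A hcardA hdisjA hcover
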